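/- Let k be an algebraically closed field and J ⊆ k[z₁,…,z_s] a radical zero-dimensional ideal whose variety has n_s points. Then there exists a linear form ℓ ∈ k[z₁,…,z_s] that separates the points of the variety, and the images of 1, ℓ, ℓ², …, ℓ^{n_s−1} form a k-basis of k[z₁,…,z_s]/J; in particular every residue class admits a univariate representation of degree at most n_s − 1. -/

import Mathlib

/-!
By the Nullstellensatz `J` is the ideal of all polynomials vanishing on `V`, so evaluation embeds
`k[z₁,…,z_s]/J` into the algebra `k^V` of functions on `V`. As `k` is infinite, the linear forms
identifying two distinct points of `V` lie in finitely many proper subspaces of the dual, so some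
linear form `ℓ` separates `V`. A polynomial of degree `< #V` vanishing at the `#V` distinct values
of `ℓ` is zero, so `1, ℓ, …, ℓ^(#V-1)` restrict to a basis of `k^V`. Hence evaluation is onto,
`k[z₁,…,z_s]/J ≃ k^V`, and the classes of these powers form a basis of the quotient.
-/

open MvPolynomial

theorem Module.Dual.exists_injOn_of_finite {k E : Type*} [Field k] [Infinite k] [AddCommGroup E]
    [Module k E] {V : Set E} (hV : V.Finite) : ∃ f : Module.Dual k E, Set.InjOn f V := by
  have : Finite V := hV
  let kernel (p : {p : V × V // p.1 ≠ p.2}) : Subspace k (Module.Dual k E) :=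
    LinearMap.ker (Module.Dual.eval k E (p.1.1 - p.1.2))
  have hproper : ∀ p, kernel p ≠ ⊤ := fun ⟨(v, w), hvw⟩ htop => by
    have : Module.Dual.eval k E (v - w) = 0 := LinearMap.ker_eq_top.mp htop
    rw [Module.eval_apply_eq_zero_iff, sub_eq_zero] at this
    exact hvw (Subtype.ext this)
  obtain ⟨f, hf⟩ : ∃ f, ∀ p, f ∉ kernel p := by
    by_contra! hcover
    obtain ⟨p, hp⟩ := Subspace.exists_eq_top_of_iUnion_eq_univ
      (Set.eq_univ_of_forall fun f => Set.mem_iUnion.mpr (hcover f))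
    exact hproper p hp
  refine ⟨f, fun v hv w hw hfvw => by_contra fun hvw => ?_⟩
  exact hf ⟨(⟨v, hv⟩, ⟨w, hw⟩), by simpa using hvw⟩ (by simp [kernel, hfvw])

open Polynomial in
theorem linearIndependent_pow_of_injective {K ι : Type*} [Field K] [Fintype ι] {μ : ι → K}
    (hμ : Function.Injective μ) :
    LinearIndependent K (fun j : Fin (Fintype.card ι) => μ ^ (j : ℕ)) := by
  let evalAt : degreeLT K (Fintype.card ι) →ₗ[K] (ι → K) :=
    LinearMap.pi (fun x => leval (μ x)) ∘ₗ (degreeLT K (Fintype.card ι)).subtype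
  have hker : LinearMap.ker evalAt = ⊥ := by
    refine LinearMap.ker_eq_bot'.mpr fun q hq => Subtype.ext ?_
    refine eq_zero_of_degree_lt_of_eval_index_eq_zero Finset.univ hμ.injOn ?_
      fun x _ => congrFun hq x
    simpa using mem_degreeLT.mp q.2
  have hbasis : evalAt ∘ degreeLT.basis K _ = fun j : Fin (Fintype.card ι) => μ ^ (j : ℕ) := by
    ext j x
    simp [evalAt]
  exact hbasis ▸ (degreeLT.basis K _).linearIndependent.map' evalAt hker

namespace MvPolynomial

variable {σ k : Type*} [Field k] (V : Set (σ → k))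

noncomputable def evalOn : MvPolynomial σ k →ₐ[k] (V → k) :=
  AlgHom.pi fun v => aeval v.1

@[simp]
theorem evalOn_apply (p : MvPolynomial σ k) (v : V) : evalOn V p v = eval v.1 p :=
  rfl

theorem ker_evalOn : RingHom.ker (evalOn V) = vanishingIdeal k V := by
  ext p
  simp [RingHom.mem_ker, _root_.funext_iff]

variable {V} [Fintype V] {p : MvPolynomial σ k}

theorem linearIndependent_evalOn_pow (hp : Set.InjOn (fun z => eval z p) V) :
    LinearIndependent k fun j : Fin (Fintype.card V) => evalOn V p ^ (j : ℕ) :=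
  linearIndependent_pow_of_injective fun v w h => Subtype.ext (hp v.2 w.2 h)

theorem evalOn_surjective_of_injOn (hp : Set.InjOn (fun z => eval z p) V) :
    Function.Surjective (evalOn V) := by
  have hspan : Submodule.span k (Set.range fun j : Fin (Fintype.card V) => evalOn V p ^ (j : ℕ))
      ≤ LinearMap.range (evalOn V).toLinearMap :=
    Submodule.span_le.mpr <| Set.range_subset_iff.mpr fun j => ⟨p ^ (j : ℕ), by simp⟩
  rw [(linearIndependent_evalOn_pow hp).span_eq_top_of_card_eq_finrank' (by simp)] at hspan
  exact LinearMap.range_eq_top.mp (top_unique hspan)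

theorem exists_basis_pow_of_injOn (hp : Set.InjOn (fun z => eval z p) V) :
    ∃ b : Module.Basis (Fin (Fintype.card V)) k (MvPolynomial σ k ⧸ vanishingIdeal k V),
      ∀ j, b j = Ideal.Quotient.mk _ (p ^ (j : ℕ)) := by
  let e := (Ideal.quotientEquivAlgOfEq k (ker_evalOn V).symm).trans
    (Ideal.quotientKerAlgEquivOfSurjective (evalOn_surjective_of_injOn hp))
  let bV := basisOfLinearIndependentOfCardEqFinrank' _ (linearIndependent_evalOn_pow hp)
    (by simp)
  refine ⟨bV.map e.symm.toLinearEquiv, fun j => ?_⟩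
  simp [bV, e]

end MvPolynomial

/-- Univariate representation at a maximum cut: over an algebraically closed field, if
`J` is a radical ideal whose zero set `V` consists of exactly `ns` distinct points, then
there is a linear form `ℓ` separating the points of `V` such that the classes of
`1, ℓ, ℓ², …, ℓ^{ns−1}` form a `k`-basis of `k[z₁,…,z_s]/J`; in particular every residue
class admits a univariate representation of degree at most `ns − 1`. -/
theorem exists_separating_linear_form_powers_basis
    {k : Type*} [Field k] [IsAlgClosed k] {s ns : ℕ}
    (J : Ideal (MvPolynomial (Fin s) k)) (hrad : J.IsRadical)
    (V : Set (Fin s → k))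
    (hV : V = {z : Fin s → k | ∀ p ∈ J, MvPolynomial.eval z p = 0})
    (hfin : V.Finite) (hcard : V.ncard = ns) :
    ∃ ℓ : MvPolynomial (Fin s) k,
      (∃ c : Fin s → k, ℓ = ∑ i, MvPolynomial.C (c i) * MvPolynomial.X i) ∧
      Set.InjOn (fun z => MvPolynomial.eval z ℓ) V ∧
      LinearIndependent k
        (fun i : Fin ns => Ideal.Quotient.mk J (ℓ ^ (i : ℕ))) ∧
      Submodule.span k
        (Set.range (fun i : Fin ns => Ideal.Quotient.mk J (ℓ ^ (i : ℕ)))) = ⊤ := by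
  have hJ : J = vanishingIdeal k V := by
    rw [show V = zeroLocus k J from hV, vanishingIdeal_zeroLocus_eq_radical, hrad.radical]
  obtain ⟨f, hf⟩ := Module.Dual.exists_injOn_of_finite (k := k) hfin
  let c i := f (Pi.basisFun k (Fin s) i)
  let ℓ := ∑ i, C (c i) * X i
  have heval : (fun z => eval z ℓ) = f := by
    ext z
    conv_rhs => rw [← (Pi.basisFun k (Fin s)).sum_repr z]
    simp [ℓ, c, mul_comm]
  have hinj : Set.InjOn (fun z => eval z ℓ) V := heval ▸ hf
  have := hfin.fintype
  obtain ⟨b, hb⟩ := exists_basis_pow_of_injOn hinj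
  obtain rfl : Fintype.card V = ns := by
    rw [← hcard, ← Nat.card_coe_set_eq, Nat.card_eq_fintype_card]
  subst hJ
  refine ⟨ℓ, ⟨c, rfl⟩, hinj, ?_⟩
  rw [← funext hb]
  exact ⟨b.linearIndependent, b.span_eq⟩
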